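/- Let N ≥ 1 and let λ_f, μ, m, β, ρ, ρ_f, ρ_w ∈ ℝ with χ = ρρ_w − ρ_f² ≠ 0, and set λ₀ = λ_f − mβ². Let A be the (2N+8) × (2N+8) real matrix with block structure A = [[0₄, A₁, 0_{4,2N}], [A₂, 0₄, 0_{4,2N}], [0_{2N,4}, A₃, 0_{2N,2N}]], where A₁ = [[−ρ_w/χ, 0, 0, −ρ_f/χ], [0, −ρ_w/χ, 0, 0], [ρ_f/χ, 0, 0, ρ/χ], [0, ρ_f/χ, 0, 0]], A₂ = [[−(λ_f+2μ), 0, −mβ, 0], [0, −μ, 0, 0], [−λ_f, 0, −mβ, 0], [mβ, 0, m, 0]], and A₃ is the 2N × 4 matrix whose odd-numbered rows all equal (ρ_f/χ, 0, 0, ρ/χ) and whose even-numbered rows all equal (0, ρ_f/χ, 0, 0). Then the characteristic polynomial of A equals X^{2N+2} · (X² − μρ_w/χ) · ( X⁴ − (((λ_f+2μ)ρ_w + m(ρ − 2ρ_f β))/χ) X² + m(λ₀ + 2μ)/χ ). In particular the eigenvalues of A do not depend on N beyond the multiplicity of 0, nor on any of the diffusive-approximation coefficients. -/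

import Mathlib

open Polynomial

/-- Entry `(i, j)` of the Biot-DA propagation matrix `A` along `x` (indices in `ℕ`):
block structure `[[0₄, A₁, 0], [A₂, 0₄, 0], [0, A₃, 0]]`. -/
noncomputable def biotAEntry (lamf μ m β ρ ρf ρw χ : ℝ) : ℕ → ℕ → ℝ
  | 0, 4 => -ρw / χ
  | 0, 7 => -ρf / χ
  | 1, 5 => -ρw / χ
  | 2, 4 => ρf / χ
  | 2, 7 => ρ / χ
  | 3, 5 => ρf / χ
  | 4, 0 => -(lamf + 2 * μ)
  | 4, 2 => -(m * β)
  | 5, 1 => -μ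
  | 6, 0 => -lamf
  | 6, 2 => -(m * β)
  | 7, 0 => m * β
  | 7, 2 => m
  | i, j =>
      if 8 ≤ i then
        if (i - 8) % 2 = 0 then
          (if j = 4 then ρf / χ else if j = 7 then ρ / χ else 0)
        else
          (if j = 5 then ρf / χ else 0)
      else 0

/-- The `(2N+8) × (2N+8)` Biot-DA propagation matrix along `x`. -/
noncomputable def biotA (N : ℕ) (lamf μ m β ρ ρf ρw χ : ℝ) :
    Matrix (Fin (2 * N + 8)) (Fin (2 * N + 8)) ℝ :=
  Matrix.of fun i j => biotAEntry lamf μ m β ρ ρf ρw χ i.val j.val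

/-! No unknown is driven by `w_y`, `σ_yy` or the diffusive variables `ψ`: their columns of `A`
vanish, so they only contribute the factor `X ^ (2N+2)` and the characteristic polynomial is that
of the remaining `6 × 6` matrix. That matrix splits into a P-wave block on `(v_sx, w_x, σ_xx, p)`
and an S-wave block on `(v_sy, σ_xy)`. The P-wave block has the shape `[[0, P], [Q, 0]]`, whose
characteristic polynomial is `χ_{QP}(X²)`; for `2 × 2` blocks this is
`X⁴ - tr (QP) X² + det Q det P`, and `det P = -1/χ`. -/

namespace Matrix

variable {ι κ n R : Type*} [CommRing R]

theorem charpoly_eq_X_pow_mul_charpoly_submatrix [Fintype ι] [DecidableEq ι] [Fintype κ]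
    [DecidableEq κ] (M : Matrix ι ι R) {f : κ → ι} (hf : f.Injective)
    (hM : ∀ i j, j ∉ Set.range f → M i j = 0) :
    M.charpoly = X ^ (Fintype.card ι - Fintype.card κ) * (M.submatrix f f).charpoly := by
  let e := ((Equiv.ofInjective f hf).sumCongr (Equiv.refl _)).trans
    (Equiv.sumCompl (· ∈ Set.range f))
  have hblocks : reindex e.symm e.symm M =
      fromBlocks (M.submatrix f f) 0 (toBlocks₂₁ (reindex e.symm e.symm M)) 0 := by
    rw [← fromBlocks_toBlocks (reindex e.symm e.symm M)]
    congr 1 <;> ext i j <;> exact hM _ _ j.2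
  have hcard : Fintype.card {j // j ∉ Set.range f} = Fintype.card ι - Fintype.card κ := by
    rw [Fintype.card_subtype_compl, Set.card_range_of_injective hf]
  rw [← charpoly_reindex e.symm, hblocks, charpoly_fromBlocks_zero₁₂, charpoly_zero, hcard,
    mul_comm]

theorem charpoly_fromBlocks_zero₁₁_zero₂₂ [Fintype n] [DecidableEq n] (P Q : Matrix n n R) :
    (fromBlocks 0 P Q 0).charpoly = (Q * P).charpoly.comp (X ^ 2) := by
  -- Right-multiplying the characteristic matrix by `[[X, P], [0, X]]` makes it block lower
  -- triangular; the factor `det [[X, P], [0, X]] = X ^ (2n)` is then cancelled.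
  set S := scalar n (X : R[X])
  set P' := P.map C
  set Q' := Q.map C
  have hdetS : S.det = X ^ Fintype.card n := by simp [S]
  have hSS : S * S = scalar n (X ^ 2) := by rw [← map_mul, sq]
  have hcomp : (Q * P).charpoly.comp (X ^ 2) = (S * S - Q' * P').det := by
    rw [charpoly, ← coe_compRingHom_apply, RingHom.map_det, hSS]
    congr 1
    ext i j : 1
    by_cases h : i = j <;> simp [h, P', Q', mul_apply]
  have hprod : fromBlocks S (-P') (-Q') S * fromBlocks S P' 0 S =
      fromBlocks (S * S) 0 (-(Q' * S)) (S * S - Q' * P') := by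
    have hcomm : S * P' = P' * S := (scalar_commute X (fun r => Commute.all _ _) P').eq
    simp only [fromBlocks_multiply, Matrix.mul_zero, add_zero, Matrix.neg_mul, hcomm,
      add_neg_cancel, neg_add_eq_sub]
  have hdet := congrArg det hprod
  rw [det_mul, det_fromBlocks_zero₂₁, det_fromBlocks_zero₁₂, det_mul, hdetS] at hdet
  rw [hcomp, charpoly, charmatrix_fromBlocks, charmatrix_zero]
  exact ((isRegular_X_pow _).mul (isRegular_X_pow _)).right (hdet.trans (mul_comm _ _))

theorem charpoly_fromBlocks_zero₁₁_zero₂₂_fin_two [Nontrivial R]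
    (P Q : Matrix (Fin 2) (Fin 2) R) :
    (fromBlocks 0 P Q 0).charpoly = X ^ 4 - C (Q * P).trace * X ^ 2 + C (Q.det * P.det) := by
  rw [charpoly_fromBlocks_zero₁₁_zero₂₂, charpoly_fin_two, det_mul]
  simp only [add_comp, sub_comp, mul_comp, C_comp, X_comp, X_pow_comp]
  ring

end Matrix

open Matrix

section Biot

variable (lamf μ m β ρ ρf ρw χ : ℝ)

noncomputable def biotPWaveBlock : Matrix (Fin 2 ⊕ Fin 2) (Fin 2 ⊕ Fin 2) ℝ :=
  fromBlocks 0 !![-ρw / χ, -ρf / χ; ρf / χ, ρ / χ] !![-(lamf + 2 * μ), -(m * β); m * β, m] 0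

noncomputable def biotSWaveBlock : Matrix (Fin 2) (Fin 2) ℝ :=
  !![0, -ρw / χ; -μ, 0]

theorem charpoly_biotPWaveBlock {lamf μ m β ρ ρf ρw χ : ℝ} (hχ : χ = ρ * ρw - ρf ^ 2)
    (hχ0 : χ ≠ 0) :
    (biotPWaveBlock lamf μ m β ρ ρf ρw χ).charpoly =
      X ^ 4 - C (((lamf + 2 * μ) * ρw + m * (ρ - 2 * ρf * β)) / χ) * X ^ 2
        + C (m * (lamf - m * β ^ 2 + 2 * μ) / χ) := by
  rw [biotPWaveBlock, charpoly_fromBlocks_zero₁₁_zero₂₂_fin_two, mul_fin_two, trace_fin_two_of,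
    det_fin_two_of, det_fin_two_of]
  congr 2
  · congr 2
    ring
  · field_simp
    rw [hχ]
    ring

theorem charpoly_biotSWaveBlock :
    (biotSWaveBlock μ ρw χ).charpoly = X ^ 2 - C (μ * ρw / χ) := by
  rw [biotSWaveBlock, charpoly_fin_two, trace_fin_two_of, det_fin_two_of, add_zero,
    show (0 : ℝ) * 0 - -ρw / χ * -μ = -(μ * ρw / χ) by ring, map_zero, zero_mul, sub_zero,
    map_neg, sub_eq_add_neg]

/-- The unknowns `(v_sx, w_x)`, `(σ_xx, p)` and `(v_sy, σ_xy)`. -/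
def biotActiveIndex (N : ℕ) : (Fin 2 ⊕ Fin 2) ⊕ Fin 2 → Fin (2 * N + 8) :=
  Fin.castLE (n := 8) (by omega) ∘ Sum.elim (Sum.elim ![0, 2] ![4, 7]) ![1, 5]

theorem biotActiveIndex_injective (N : ℕ) : (biotActiveIndex N).Injective :=
  (Fin.castLE_injective _).comp (by decide)

theorem biotAEntry_eq_zero (i : ℕ) {j : ℕ} (hj : j = 3 ∨ j = 6 ∨ 8 ≤ j) :
    biotAEntry lamf μ m β ρ ρf ρw χ i j = 0 := by
  unfold biotAEntry
  split <;> grind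

theorem biotA_apply_eq_zero_of_notMem_range {N : ℕ} (i j : Fin (2 * N + 8))
    (hj : j ∉ Set.range (biotActiveIndex N)) : biotA N lamf μ m β ρ ρf ρw χ i j = 0 := by
  refine biotAEntry_eq_zero lamf μ m β ρ ρf ρw χ _ ?_
  have hsurj : ∀ k : Fin 8, k ≠ 3 → k ≠ 6 →
      ∃ x, Sum.elim (Sum.elim ![0, 2] ![4, 7]) ![1, 5] x = k := by decide
  by_contra! h
  obtain ⟨x, hx⟩ :=
    hsurj ⟨j, by omega⟩ (by simp [Fin.ext_iff, h.1]) (by simp [Fin.ext_iff, h.2.1])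
  exact hj ⟨x, Fin.ext (congrArg Fin.val hx :)⟩

theorem biotA_submatrix_biotActiveIndex (N : ℕ) :
    (biotA N lamf μ m β ρ ρf ρw χ).submatrix (biotActiveIndex N) (biotActiveIndex N) =
      fromBlocks (biotPWaveBlock lamf μ m β ρ ρf ρw χ) 0 0 (biotSWaveBlock μ ρw χ) := by
  ext ((i | i) | i) ((j | j) | j) <;> fin_cases i <;> fin_cases j <;> rfl

end Biot

theorem biotA_charpoly_general (N : ℕ)
    (lamf μ m β ρ ρf ρw χ lam0 : ℝ)
    (hχ : χ = ρ * ρw - ρf ^ 2) (hχ0 : χ ≠ 0)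
    (hlam0 : lam0 = lamf - m * β ^ 2) :
    (biotA N lamf μ m β ρ ρf ρw χ).charpoly =
      X ^ (2 * N + 2) * (X ^ 2 - C (μ * ρw / χ)) *
        (X ^ 4 - C (((lamf + 2 * μ) * ρw + m * (ρ - 2 * ρf * β)) / χ) * X ^ 2
          + C (m * (lam0 + 2 * μ) / χ)) := by
  have hcard : Fintype.card (Fin (2 * N + 8)) - Fintype.card ((Fin 2 ⊕ Fin 2) ⊕ Fin 2) =
      2 * N + 2 := by simp
  rw [charpoly_eq_X_pow_mul_charpoly_submatrix _ (biotActiveIndex_injective N)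
      (biotA_apply_eq_zero_of_notMem_range lamf μ m β ρ ρf ρw χ), hcard,
    biotA_submatrix_biotActiveIndex, charpoly_fromBlocks_zero₁₂, charpoly_biotPWaveBlock hχ hχ0,
    charpoly_biotSWaveBlock, hlam0]
  ring

/-- Characteristic polynomial of the Biot-DA propagation matrix `A`:
`χ_A(X) = X^(2N+2) (X² − μρw/χ) (X⁴ − ((λf+2μ)ρw + m(ρ−2ρfβ))/χ · X² + m(λ₀+2μ)/χ)`;
in particular the eigenvalues do not depend on `N` (beyond the multiplicity of `0`)
nor on the diffusive-approximation coefficients. -/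
theorem biotA_charpoly (N : ℕ) (hN : 1 ≤ N)
    (lamf μ m β ρ ρf ρw χ lam0 : ℝ)
    (hχ : χ = ρ * ρw - ρf ^ 2) (hχ0 : χ ≠ 0)
    (hlam0 : lam0 = lamf - m * β ^ 2) :
    (biotA N lamf μ m β ρ ρf ρw χ).charpoly =
      X ^ (2 * N + 2) * (X ^ 2 - C (μ * ρw / χ)) *
        (X ^ 4 - C (((lamf + 2 * μ) * ρw + m * (ρ - 2 * ρf * β)) / χ) * X ^ 2
          + C (m * (lam0 + 2 * μ) / χ)) :=
  biotA_charpoly_general N lamf μ m β ρ ρf ρw χ lam0 hχ hχ0 hlam0
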